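/- arXiv:1808.03444 — 2 statements merged into one kernel-verified Lean document; each statement's English description precedes it below -/
import Mathlib

section
/- Let λ > 0, ω ∈ ℝ, and design points 0 = t₁ < t₂ < ... < tₙ = 1 with gaps dᵢ = tᵢ₊₁ − tᵢ. Then C(n) admits a factorization C(n) = L·D·U, where L is a lower block triangular 2n×2n matrix with I₂ blocks on the main diagonal, U is an upper block triangular 2n×2n matrix with I₂ blocks on the main diagonal, and D is the block diagonal matrix with diagonal blocks (I₂, I₂ − exp((A+Aᵀ)d₁), I₂ − exp((A+Aᵀ)d₂), ..., I₂ − exp((A+Aᵀ)d_{n−1})). -/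
open Matrix

/-- The drift matrix `A = [[-λ, -ω], [ω, -λ]]` of the complex OU process. -/
noncomputable def Amat (lam ω : ℝ) : Matrix (Fin 2) (Fin 2) ℝ := !![-lam, -ω; ω, -lam]

/-- The `2n × 2n` block covariance matrix `C(n)` of the observations, for the
design `t 0 < t 1 < ⋯ < t m` (so `n = m + 1` design points): the `(i,j)`-th
`2 × 2` block is `exp(A(tᵢ - tⱼ))` for `i ≥ j` and `exp(Aᵀ(tⱼ - tᵢ))` for `i < j`. -/
noncomputable def Cmat (lam ω : ℝ) {m : ℕ} (t : Fin (m + 1) → ℝ) :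
    Matrix (Fin (m + 1) × Fin 2) (Fin (m + 1) × Fin 2) ℝ :=
  fun p q =>
    (if q.1 ≤ p.1 then NormedSpace.exp ((t p.1 - t q.1) • Amat lam ω)
     else NormedSpace.exp ((t q.1 - t p.1) • (Amat lam ω)ᵀ)) p.2 q.2

/-- The gap `dₖ = t_{k+1} − t_k` (0-based), extended by `0` outside the design. -/
noncomputable def gapN {m : ℕ} (t : Fin (m + 1) → ℝ) (k : ℕ) : ℝ :=
  if h : k + 1 ≤ m then t ⟨k + 1, by omega⟩ - t ⟨k, by omega⟩ else 0

/-- The block diagonal matrix `D` with diagonal `2 × 2` blocks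
`(I₂, I₂ − exp((A+Aᵀ)d₁), …, I₂ − exp((A+Aᵀ)d_{n−1}))`. -/
noncomputable def Dmat (lam ω : ℝ) {m : ℕ} (t : Fin (m + 1) → ℝ) :
    Matrix (Fin (m + 1) × Fin 2) (Fin (m + 1) × Fin 2) ℝ :=
  fun p q =>
    if p.1 = q.1 then
      (if p.1.val = 0 then (1 : Matrix (Fin 2) (Fin 2) ℝ)
       else 1 - NormedSpace.exp (gapN t (p.1.val - 1) • (Amat lam ω + (Amat lam ω)ᵀ)))
        p.2 q.2
    else 0

/-- `exp(x A + y Aᵀ)`. -/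
noncomputable def Emat (lam ω x y : ℝ) : Matrix (Fin 2) (Fin 2) ℝ :=
  NormedSpace.exp (x • Amat lam ω + y • (Amat lam ω)ᵀ)

lemma commute_A_At (lam ω : ℝ) : Commute (Amat lam ω) (Amat lam ω)ᵀ := by
  have h : (Amat lam ω)ᵀ = (-(2*lam)) • (1 : Matrix (Fin 2) (Fin 2) ℝ) - Amat lam ω := by
    ext i j
    fin_cases i <;> fin_cases j <;> simp [Amat] <;> ring
  rw [h]
  exact ((Commute.one_right (Amat lam ω)).smul_right _).sub_right (Commute.refl _)

lemma Emat_mul (lam ω x y x' y' : ℝ) :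
    Emat lam ω x y * Emat lam ω x' y' = Emat lam ω (x + x') (y + y') := by
  have h := commute_A_At lam ω
  have hc : Commute (x • Amat lam ω + y • (Amat lam ω)ᵀ)
      (x' • Amat lam ω + y' • (Amat lam ω)ᵀ) := by
    exact (((Commute.refl (Amat lam ω)).smul_left x |>.smul_right x').add_right
      ((h.smul_left x).smul_right y')).add_left
      (((h.symm.smul_left y).smul_right x').add_right
        ((Commute.refl _).smul_left y |>.smul_right y'))
  have he : (x + x') • Amat lam ω + (y + y') • (Amat lam ω)ᵀ =
      (x • Amat lam ω + y • (Amat lam ω)ᵀ) + (x' • Amat lam ω + y' • (Amat lam ω)ᵀ) := by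
    module
  rw [Emat, Emat, Emat, he]
  exact (Matrix.exp_add_of_commute _ _ hc).symm

lemma Matrix.exp_zero' : NormedSpace.exp (0 : Matrix (Fin 2) (Fin 2) ℝ) = 1 := by
  letI : SeminormedRing (Matrix (Fin 2) (Fin 2) ℝ) := Matrix.linftyOpSemiNormedRing
  letI : NormedRing (Matrix (Fin 2) (Fin 2) ℝ) := Matrix.linftyOpNormedRing
  letI : NormedAlgebra ℝ (Matrix (Fin 2) (Fin 2) ℝ) := Matrix.linftyOpNormedAlgebra
  exact NormedSpace.exp_zero

lemma Emat_zero_zero (lam ω : ℝ) : Emat lam ω 0 0 = 1 := by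
  rw [Emat]
  simp [Matrix.exp_zero']

lemma Emat_left (lam ω x : ℝ) : Emat lam ω x 0 = NormedSpace.exp (x • Amat lam ω) := by
  simp [Emat]

lemma Emat_right (lam ω y : ℝ) :
    Emat lam ω 0 y = NormedSpace.exp (y • (Amat lam ω)ᵀ) := by
  simp [Emat]

/-- The diagonal 2×2 blocks of `D`. -/
noncomputable def dblock (lam ω : ℝ) {m : ℕ} (t : Fin (m + 1) → ℝ) (k : Fin (m + 1)) :
    Matrix (Fin 2) (Fin 2) ℝ :=
  if k.val = 0 then 1 else 1 - Emat lam ω (gapN t (k.val - 1)) (gapN t (k.val - 1))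

lemma sum_telescope (lam ω : ℝ) (m : ℕ) (t : Fin (m + 1) → ℝ) (xi xj : ℝ) :
    ∀ r : Fin (m + 1),
      ∑ k ∈ Finset.Iic r,
        Emat lam ω (xi - t k) 0 * dblock lam ω t k * Emat lam ω 0 (xj - t k)
      = Emat lam ω (xi - t r) (xj - t r) := by
  intro r
  induction r using Fin.induction with
  | zero =>
    have h0 : Finset.Iic (0 : Fin (m + 1)) = {0} := by
      ext k; simp [Finset.mem_Iic, Fin.le_zero_iff]
    rw [h0, Finset.sum_singleton]
    have hd0 : dblock lam ω t 0 = 1 := by rw [dblock]; simp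
    rw [hd0, mul_one, Emat_mul]
    norm_num
  | succ s ih =>
    have hins : Finset.Iic (s.succ) = insert s.succ (Finset.Iic s.castSucc) := by
      ext k
      simp only [Finset.mem_Iic, Finset.mem_insert, Fin.le_def, Fin.ext_iff,
        Fin.val_succ, Fin.coe_castSucc]
      omega
    have hnot : s.succ ∉ Finset.Iic s.castSucc := by
      simp only [Finset.mem_Iic, Fin.le_def, Fin.val_succ, Fin.coe_castSucc]
      omega
    rw [hins, Finset.sum_insert hnot, ih]
    have hd : dblock lam ω t s.succ
        = 1 - Emat lam ω (t s.succ - t s.castSucc) (t s.succ - t s.castSucc) := by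
      rw [dblock]
      have h1 : (s.succ : Fin (m + 1)).val = s.val + 1 := rfl
      rw [h1]
      simp only [Nat.add_sub_cancel, if_neg (Nat.succ_ne_zero s.val)]
      have hg : gapN t s.val = t s.succ - t s.castSucc := by
        rw [gapN, dif_pos (by omega : s.val + 1 ≤ m)]
        congr 1
      rw [hg]
    rw [hd]
    have e1 : Emat lam ω (xi - t s.succ) 0 * Emat lam ω 0 (xj - t s.succ)
        = Emat lam ω (xi - t s.succ) (xj - t s.succ) := by
      rw [Emat_mul]; norm_num
    have e2 : Emat lam ω (xi - t s.succ) 0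
          * Emat lam ω (t s.succ - t s.castSucc) (t s.succ - t s.castSucc)
          * Emat lam ω 0 (xj - t s.succ)
        = Emat lam ω (xi - t s.castSucc) (xj - t s.castSucc) := by
      rw [Emat_mul, Emat_mul]
      congr 1 <;> ring
    have expand : Emat lam ω (xi - t s.succ) 0
          * (1 - Emat lam ω (t s.succ - t s.castSucc) (t s.succ - t s.castSucc))
          * Emat lam ω 0 (xj - t s.succ)
        = Emat lam ω (xi - t s.succ) 0 * Emat lam ω 0 (xj - t s.succ)
          - Emat lam ω (xi - t s.succ) 0
            * Emat lam ω (t s.succ - t s.castSucc) (t s.succ - t s.castSucc)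
            * Emat lam ω 0 (xj - t s.succ) := by
      noncomm_ring
    rw [expand, e1, e2]
    abel

/-- The covariance matrix `C(n)` of a complex OU process observed at design points
`0 = t₁ < t₂ < ⋯ < tₙ = 1` admits a block `LDU` factorization `C(n) = L·D·U`,
where `L` is lower block triangular with identity `2 × 2` diagonal blocks, `U` is
upper block triangular with identity `2 × 2` diagonal blocks, and `D` is block
diagonal with diagonal blocks `(I₂, I₂ − exp((A+Aᵀ)d₁), …, I₂ − exp((A+Aᵀ)d_{n−1}))`. -/
theorem Cmat_LDU_factorization (lam ω : ℝ) (hlam : 0 < lam) (m : ℕ) (hm : 1 ≤ m)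
    (t : Fin (m + 1) → ℝ) (ht : StrictMono t) (ht0 : t 0 = 0) (ht1 : t (Fin.last m) = 1) :
    ∃ L U : Matrix (Fin (m + 1) × Fin 2) (Fin (m + 1) × Fin 2) ℝ,
      (∀ p q : Fin (m + 1) × Fin 2, p.1 < q.1 → L p q = 0) ∧
      (∀ (i : Fin (m + 1)) (a b : Fin 2), L (i, a) (i, b) = (1 : Matrix (Fin 2) (Fin 2) ℝ) a b) ∧
      (∀ p q : Fin (m + 1) × Fin 2, q.1 < p.1 → U p q = 0) ∧
      (∀ (i : Fin (m + 1)) (a b : Fin 2), U (i, a) (i, b) = (1 : Matrix (Fin 2) (Fin 2) ℝ) a b) ∧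
      Cmat lam ω t = L * Dmat lam ω t * U := by
  classical
  set E := Emat lam ω with hE
  set Lb : Matrix (Fin (m + 1)) (Fin (m + 1)) (Matrix (Fin 2) (Fin 2) ℝ) :=
    fun i k => if k ≤ i then E (t i - t k) 0 else 0 with hLb
  set Ub : Matrix (Fin (m + 1)) (Fin (m + 1)) (Matrix (Fin 2) (Fin 2) ℝ) :=
    fun k j => if k ≤ j then E 0 (t j - t k) else 0 with hUb
  let F := Matrix.compRingEquiv (Fin (m + 1)) (Fin 2) ℝ
  refine ⟨F Lb, F Ub, ?_, ?_, ?_, ?_, ?_⟩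
  · intro p q hpq
    show Lb p.1 q.1 p.2 q.2 = 0
    rw [hLb]
    simp only [if_neg (not_le.2 hpq)]
    rfl
  · intro i a b
    show Lb i i a b = _
    rw [hLb]
    simp only [le_refl, if_pos, sub_self, hE, Emat_zero_zero]
  · intro p q hpq
    show Ub p.1 q.1 p.2 q.2 = 0
    rw [hUb]
    simp only [if_neg (not_le.2 hpq)]
    rfl
  · intro i a b
    show Ub i i a b = _
    rw [hUb]
    simp only [le_refl, if_pos, sub_self, hE, Emat_zero_zero]
  · -- main identity
    have hD : Dmat lam ω t = F (Matrix.diagonal (dblock lam ω t)) := by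
      ext ⟨p1, p2⟩ ⟨q1, q2⟩
      show Dmat lam ω t (p1, p2) (q1, q2) = Matrix.diagonal (dblock lam ω t) p1 q1 p2 q2
      rw [Dmat, Matrix.diagonal_apply]
      by_cases h : p1 = q1
      · simp only [if_pos h, dblock]
        by_cases h0 : p1.val = 0
        · simp [h0]
        · simp only [if_neg h0, hE, Emat]
          rw [smul_add]
      · simp [if_neg h]
    rw [hD, ← _root_.map_mul, ← _root_.map_mul]
    have hblock : Cmat lam ω t = F (Lb * Matrix.diagonal (dblock lam ω t) * Ub) := by
      ext ⟨i, a⟩ ⟨j, b⟩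
      show Cmat lam ω t (i, a) (j, b) = (Lb * Matrix.diagonal (dblock lam ω t) * Ub) i j a b
      have hmain : (Lb * Matrix.diagonal (dblock lam ω t) * Ub) i j
          = E (t i - t (min i j)) (t j - t (min i j)) := by
        have h1 : (Lb * Matrix.diagonal (dblock lam ω t) * Ub) i j
            = ∑ k, Lb i k * dblock lam ω t k * Ub k j := by
          rw [Matrix.mul_apply]
          simp_rw [Matrix.mul_diagonal]
        rw [h1]
        have h2 : ∀ k : Fin (m + 1), Lb i k * dblock lam ω t k * Ub k j
            = if k ∈ Finset.Iic (min i j) then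
                E (t i - t k) 0 * dblock lam ω t k * E 0 (t j - t k) else 0 := by
          intro k
          rw [hLb, hUb]
          simp only [Finset.mem_Iic, le_min_iff]
          by_cases h1' : k ≤ i <;> by_cases h2' : k ≤ j <;>
            simp [h1', h2', mul_assoc]
        rw [Finset.sum_congr rfl (fun k _ => h2 k), Finset.sum_ite_mem,
          Finset.univ_inter, hE]
        exact sum_telescope lam ω m t (t i) (t j) (min i j)
      rw [hmain]
      rw [Cmat]
      by_cases hji : j ≤ i
      · rw [min_eq_right hji, if_pos hji, sub_self, hE, Emat_left]
      · rw [min_eq_left (le_of_not_ge hji), if_neg hji, sub_self, hE, Emat_right]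
    rw [hblock]
end

section
/- (Theorem 2, optimality part.) Let λ > 0, ω ∈ ℝ, and n ≥ 2. Among all designs 0 = t₁ < t₂ < ... < tₙ = 1, the determinant det C(n) is maximized by the equidistant design tᵢ = (i−1)/(n−1), i = 1, ..., n; equivalently, the equidistant design maximizes the entropy ln det C(n) of the Gaussian observation vector of the complex Ornstein–Uhlenbeck process. -/
open Matrix

section Aux
variable (lam ω : ℝ)

lemma amat_transpose : (Amat lam ω)ᵀ = !![-lam, ω; -ω, -lam] := by
  ext i j; fin_cases i <;> fin_cases j <;> simp [Amat]

lemma amat_add_transpose :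
    Amat lam ω + (Amat lam ω)ᵀ = (-(2*lam)) • (1 : Matrix (Fin 2) (Fin 2) ℝ) := by
  rw [amat_transpose]; ext i j
  fin_cases i <;> fin_cases j <;> simp [Amat] <;> ring

lemma amat_comm_transpose : Commute (Amat lam ω) (Amat lam ω)ᵀ := by
  show _ * _ = _ * _
  rw [amat_transpose]; ext i j
  fin_cases i <;> fin_cases j <;> simp [Amat, Matrix.mul_apply, Fin.sum_univ_succ] <;> ring

lemma exp_smul_one (c : ℝ) :
    NormedSpace.exp (c • (1 : Matrix (Fin 2) (Fin 2) ℝ)) = Real.exp c • 1 := by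
  rw [Matrix.smul_one_eq_diagonal, Matrix.exp_diagonal, Matrix.smul_one_eq_diagonal]
  congr 1; funext i
  rw [Pi.exp_def]; simp [← Real.exp_eq_exp_ℝ]

lemma exp_smul_add (s u : ℝ) (M : Matrix (Fin 2) (Fin 2) ℝ) :
    NormedSpace.exp ((s + u) • M) = NormedSpace.exp (s • M) * NormedSpace.exp (u • M) := by
  rw [add_smul]
  exact Matrix.exp_add_of_commute _ _ ((Commute.refl M).smul_left s |>.smul_right u)

lemma exp_mul_exp_transpose (s : ℝ) :
    NormedSpace.exp (s • Amat lam ω) * NormedSpace.exp (s • (Amat lam ω)ᵀ)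
      = Real.exp (-(2*lam)*s) • (1 : Matrix (Fin 2) (Fin 2) ℝ) := by
  rw [← Matrix.exp_add_of_commute _ _ (((amat_comm_transpose lam ω).smul_left s).smul_right s),
    ← smul_add, amat_add_transpose, smul_smul, mul_comm s, exp_smul_one]

end Aux

/-- the diagonal factors of the LU decomposition -/
noncomputable def cfac (lam : ℝ) {m : ℕ} (t : Fin (m+1) → ℝ) : Fin (m+1) → ℝ :=
  Fin.cases 1 (fun j => 1 - Real.exp (-(2*lam) * (t j.succ - t j.castSucc)))

variable {m : ℕ}

lemma cfac_zero (lam : ℝ) (t : Fin (m+1) → ℝ) : cfac lam t 0 = 1 := by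
  simp [cfac]

lemma cfac_succ (lam : ℝ) (t : Fin (m+1) → ℝ) (j : Fin m) :
    cfac lam t j.succ = 1 - Real.exp (-(2*lam) * (t j.succ - t j.castSucc)) := by
  simp [cfac]

lemma Iic_zero : Finset.Iic (0 : Fin (m+1)) = {0} := by
  ext k; simp [Finset.mem_Iic, Fin.le_zero_iff]

lemma Iic_succ (j : Fin m) :
    Finset.Iic j.succ = insert j.succ (Finset.Iic j.castSucc) := by
  ext k
  simp only [Finset.mem_Iic, Finset.mem_insert, Fin.le_def, Fin.ext_iff, Fin.val_succ,
    Fin.coe_castSucc]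
  omega

lemma key_sum (lam : ℝ) (t : Fin (m+1) → ℝ) (j : Fin (m+1)) :
    ∑ k ∈ Finset.Iic j, cfac lam t k * Real.exp (2*lam * t k) = Real.exp (2*lam * t j) := by
  induction j using Fin.induction with
  | zero => rw [Iic_zero]; simp [cfac_zero]
  | succ j ih =>
    rw [Iic_succ, Finset.sum_insert (by
      simp only [Finset.mem_Iic]
      exact not_le.2 ((Fin.castSucc_lt_succ : j.castSucc < j.succ))), ih, cfac_succ]
    have h : Real.exp (-(2*lam) * (t j.succ - t j.castSucc)) * Real.exp (2*lam * t j.succ)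
        = Real.exp (2*lam * t j.castSucc) := by
      rw [← Real.exp_add]; ring_nf
    nlinarith [h]

lemma sum_Iic_one (lam : ℝ) (t : Fin (m+1) → ℝ) (j : Fin (m+1)) :
    ∑ k ∈ Finset.Iic j, cfac lam t k * Real.exp (-(2*lam) * (t j - t k)) = 1 := by
  have h : ∀ k : Fin (m+1), cfac lam t k * Real.exp (-(2*lam) * (t j - t k))
      = (cfac lam t k * Real.exp (2*lam * t k)) * Real.exp (-(2*lam) * t j) := by
    intro k
    rw [mul_assoc, ← Real.exp_add]
    ring_nf
  rw [Finset.sum_congr rfl fun k _ => h k, ← Finset.sum_mul, key_sum, ← Real.exp_add]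
  ring_nf
  exact Real.exp_zero

noncomputable def Lmat (lam ω : ℝ) {m : ℕ} (t : Fin (m+1) → ℝ) :
    Matrix (Fin (m+1) × Fin 2) (Fin (m+1) × Fin 2) ℝ :=
  fun p q => if q.1 ≤ p.1 then NormedSpace.exp ((t p.1 - t q.1) • Amat lam ω) p.2 q.2 else 0

noncomputable def Umat (lam ω : ℝ) {m : ℕ} (t : Fin (m+1) → ℝ) :
    Matrix (Fin (m+1) × Fin 2) (Fin (m+1) × Fin 2) ℝ :=
  fun p q => if p.1 ≤ q.1 then
    cfac lam t p.1 * NormedSpace.exp ((t q.1 - t p.1) • (Amat lam ω)ᵀ) p.2 q.2 else 0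

lemma cmat_eq_mul (lam ω : ℝ) (t : Fin (m+1) → ℝ) :
    Cmat lam ω t = Lmat lam ω t * Umat lam ω t := by
  funext p q
  obtain ⟨i, a⟩ := p
  obtain ⟨j, b⟩ := q
  rw [Matrix.mul_apply, Fintype.sum_prod_type]
  have hterm : ∀ k : Fin (m+1),
      (∑ c : Fin 2, Lmat lam ω t (i, a) (k, c) * Umat lam ω t (k, c) (j, b))
      = if k ≤ i ∧ k ≤ j then
          cfac lam t k * ((NormedSpace.exp ((t i - t k) • Amat lam ω) *
            NormedSpace.exp ((t j - t k) • (Amat lam ω)ᵀ)) a b) else 0 := by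
    intro k
    by_cases h1 : k ≤ i <;> by_cases h2 : k ≤ j <;>
      simp [Lmat, Umat, h1, h2, Matrix.mul_apply, Finset.mul_sum] <;>
      ring
  rw [Finset.sum_congr rfl fun k _ => hterm k]
  have hset : ∀ k : Fin (m+1), (k ≤ i ∧ k ≤ j) ↔ k ∈ Finset.Iic (i ⊓ j) := by
    intro k; simp [Finset.mem_Iic, le_inf_iff]
  rw [Finset.sum_congr rfl fun k _ => if_congr (hset k) rfl rfl, Finset.sum_ite_mem,
    Finset.univ_inter]
  by_cases hij : j ≤ i
  · have hmin : i ⊓ j = j := inf_eq_right.2 hij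
    rw [hmin]
    have hE : ∀ k ∈ Finset.Iic j,
        cfac lam t k * ((NormedSpace.exp ((t i - t k) • Amat lam ω) *
          NormedSpace.exp ((t j - t k) • (Amat lam ω)ᵀ)) a b)
        = (cfac lam t k * Real.exp (-(2*lam) * (t j - t k))) *
            (NormedSpace.exp ((t i - t j) • Amat lam ω)) a b := by
      intro k _
      have h1 : (t i - t k) = (t i - t j) + (t j - t k) := by ring
      rw [h1, exp_smul_add, mul_assoc, exp_mul_exp_transpose, Matrix.mul_smul, mul_one,
        Matrix.smul_apply, smul_eq_mul]
      ring_nf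
    rw [Finset.sum_congr rfl hE, ← Finset.sum_mul, sum_Iic_one, one_mul]
    simp [Cmat, hij]
  · have hmin : i ⊓ j = i := inf_eq_left.2 (le_of_not_ge hij)
    rw [hmin]
    have hE : ∀ k ∈ Finset.Iic i,
        cfac lam t k * ((NormedSpace.exp ((t i - t k) • Amat lam ω) *
          NormedSpace.exp ((t j - t k) • (Amat lam ω)ᵀ)) a b)
        = (cfac lam t k * Real.exp (-(2*lam) * (t i - t k))) *
            (NormedSpace.exp ((t j - t i) • (Amat lam ω)ᵀ)) a b := by
      intro k _
      have h1 : (t j - t k) = (t i - t k) + (t j - t i) := by ring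
      rw [h1, exp_smul_add, ← mul_assoc, exp_mul_exp_transpose, Matrix.smul_mul, one_mul,
        Matrix.smul_apply, smul_eq_mul]
      ring_nf
    rw [Finset.sum_congr rfl hE, ← Finset.sum_mul, sum_Iic_one, one_mul]
    simp [Cmat, hij]

def blockEquiv (k : Fin (m+1)) : {p : Fin (m+1) × Fin 2 // p.1 = k} ≃ Fin 2 where
  toFun p := p.1.2
  invFun b := ⟨(k, b), rfl⟩
  left_inv := fun ⟨⟨k', b⟩, h⟩ => by subst h; rfl
  right_inv := fun b => rfl

lemma card_block (k : Fin (m+1)) : Fintype.card {p : Fin (m+1) × Fin 2 // p.1 = k} = 2 := by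
  rw [Fintype.card_congr (blockEquiv k), Fintype.card_fin]

lemma det_Lmat (lam ω : ℝ) (t : Fin (m+1) → ℝ) : (Lmat lam ω t).det = 1 := by
  rw [← Matrix.det_transpose]
  have hbt : ((Lmat lam ω t)ᵀ).BlockTriangular Prod.fst := by
    intro p q h
    simp only [Matrix.transpose_apply, Lmat]
    rw [if_neg (not_le.2 h)]
  rw [hbt.det_fintype]
  refine Finset.prod_eq_one fun k _ => ?_
  have hone : ((Lmat lam ω t)ᵀ.toSquareBlock Prod.fst k) = 1 := by
    ext ⟨p, hp⟩ ⟨q, hq⟩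
    simp only [Matrix.toSquareBlock_def, Matrix.transpose_apply, Lmat, Matrix.of_apply]
    rw [if_pos (le_of_eq (hp.trans hq.symm))]
    rw [show t q.1 - t p.1 = 0 by rw [hp, hq, sub_self], zero_smul, NormedSpace.exp_zero]
    by_cases h : p.2 = q.2 <;>
      simp [Matrix.one_apply, h, Subtype.ext_iff, Prod.ext_iff, hp, hq, eq_comm]
  rw [hone, Matrix.det_one]

lemma det_Umat (lam ω : ℝ) (t : Fin (m+1) → ℝ) :
    (Umat lam ω t).det = ∏ k : Fin (m+1), (cfac lam t k)^2 := by
  have hbt : (Umat lam ω t).BlockTriangular Prod.fst := by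
    intro p q h
    simp only [Umat]
    rw [if_neg (not_le.2 h)]
  rw [hbt.det_fintype]
  refine Finset.prod_congr rfl fun k _ => ?_
  have hblk : (Umat lam ω t).toSquareBlock Prod.fst k
      = cfac lam t k • (1 : Matrix {p : Fin (m+1) × Fin 2 // p.1 = k} _ ℝ) := by
    ext ⟨p, hp⟩ ⟨q, hq⟩
    simp only [Matrix.toSquareBlock_def, Umat, Matrix.smul_apply, smul_eq_mul, Matrix.of_apply]
    rw [if_pos (le_of_eq (hp.trans hq.symm))]
    rw [show t q.1 - t p.1 = 0 by rw [hp, hq, sub_self], zero_smul, NormedSpace.exp_zero, hp]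
    by_cases h : p.2 = q.2 <;>
      simp [Matrix.one_apply, h, Subtype.ext_iff, Prod.ext_iff, hp, hq, eq_comm]
  rw [hblk, Matrix.det_smul, Matrix.det_one, card_block, mul_one, sq]

lemma det_cmat (lam ω : ℝ) (t : Fin (m+1) → ℝ) :
    (Cmat lam ω t).det = ∏ k : Fin (m+1), (cfac lam t k)^2 := by
  rw [cmat_eq_mul, Matrix.det_mul, det_Lmat, det_Umat, one_mul]

/-- **Theorem 2 (entropy optimality).** Among all designs `0 = t₁ < ⋯ < tₙ = 1`,
the determinant `det C(n)` — and hence the entropy `ln det C(n)` of the Gaussian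
observation vector of the complex OU process — is maximized by the equidistant
design `tᵢ = (i−1)/(n−1)`. -/
theorem entropy_optimal_equidistant (lam ω : ℝ) (hlam : 0 < lam) (m : ℕ) (hm : 1 ≤ m)
    (t : Fin (m + 1) → ℝ) (ht : StrictMono t) (ht0 : t 0 = 0) (ht1 : t (Fin.last m) = 1) :
    (Cmat lam ω t).det ≤
        (Cmat lam ω (fun i : Fin (m + 1) => (i : ℕ) / (m : ℝ))).det ∧
      Real.log (Cmat lam ω t).det ≤
        Real.log (Cmat lam ω (fun i : Fin (m + 1) => (i : ℕ) / (m : ℝ))).det := by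
  have hm0 : (0:ℝ) < m := by exact_mod_cast hm
  set teq : Fin (m+1) → ℝ := fun i => (i : ℕ) / (m : ℝ) with hteq
  set d : Fin m → ℝ := fun j => t j.succ - t j.castSucc with hd
  have hdpos : ∀ j, 0 < d j := fun j => sub_pos.2 (ht ((Fin.castSucc_lt_succ : j.castSucc < j.succ)))
  -- telescoping sum of gaps
  set f : ℕ → ℝ := fun k => t ⟨min k m, Nat.lt_succ_of_le (min_le_right k m)⟩ with hf
  have hfd : ∀ j : Fin m, d j = f (j.val + 1) - f j.val := by
    intro j
    have h1 : (⟨min (j.val + 1) m, Nat.lt_succ_of_le (min_le_right _ m)⟩ : Fin (m+1)) = j.succ := by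
      apply Fin.ext
      rw [Fin.val_succ]
      exact Nat.min_eq_left j.isLt
    have h2 : (⟨min j.val m, Nat.lt_succ_of_le (min_le_right _ m)⟩ : Fin (m+1)) = j.castSucc := by
      apply Fin.ext
      rw [Fin.coe_castSucc]
      exact Nat.min_eq_left j.isLt.le
    simp only [hd, hf, h1, h2]
  have hdsum : ∑ j : Fin m, d j = 1 := by
    have := Fin.sum_univ_eq_sum_range (fun k => f (k + 1) - f k) m
    rw [Finset.sum_congr rfl fun j _ => hfd j, this, Finset.sum_range_sub f m]
    have hfm : f m = 1 := by
      rw [hf]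
      have : (⟨min m m, Nat.lt_succ_of_le (min_le_right m m)⟩ : Fin (m+1)) = Fin.last m :=
        Fin.ext (by simp)
      exact (congrArg t this).trans ht1
    have hf0 : f 0 = 0 := by
      rw [hf]
      have : (⟨min 0 m, Nat.lt_succ_of_le (min_le_right 0 m)⟩ : Fin (m+1)) = 0 :=
        Fin.ext (by simp)
      exact (congrArg t this).trans ht0
    rw [hfm, hf0, sub_zero]
  set z : Fin m → ℝ := fun j => 1 - Real.exp (-(2*lam) * d j) with hz
  have hzpos : ∀ j, 0 < z j := by
    intro j
    have hx : -(2*lam) * d j < 0 := by nlinarith [hdpos j]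
    simpa [hz] using sub_pos.2 (Real.exp_lt_one_iff.2 hx)
  set Z : ℝ := 1 - Real.exp (-(2*lam) * (1/m)) with hZ
  -- determinant of the design t
  have hdetT : (Cmat lam ω t).det = (∏ j : Fin m, z j)^2 := by
    rw [det_cmat, Fin.prod_univ_succ, cfac_zero, one_pow, one_mul, ← Finset.prod_pow]
    exact Finset.prod_congr rfl fun j _ => by rw [cfac_succ]
  -- determinant of the equidistant design
  have hceq : ∀ j : Fin m, cfac lam teq j.succ = Z := by
    intro j
    rw [cfac_succ, hZ]
    have : teq j.succ - teq j.castSucc = 1/m := by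
      simp only [hteq]
      rw [div_sub_div_same]
      congr 1
      push_cast [Fin.val_succ, Fin.coe_castSucc]
      ring
    rw [this]
  have hdetE : (Cmat lam ω teq).det = (Z^m)^2 := by
    rw [det_cmat, Fin.prod_univ_succ, cfac_zero, one_pow, one_mul,
      Finset.prod_congr rfl fun j _ => by rw [hceq j], Finset.prod_const, Finset.card_univ,
      Fintype.card_fin, ← pow_mul, ← pow_mul, Nat.mul_comm]
  -- the key inequality : ∏ z ≤ Z ^ m
  set w : Fin m → ℝ := fun _ => (m:ℝ)⁻¹ with hw_def
  have hw : ∑ _j : Fin m, (m:ℝ)⁻¹ = 1 := by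
    rw [Finset.sum_const, Finset.card_univ, Fintype.card_fin, nsmul_eq_mul,
      mul_inv_cancel₀ hm0.ne']
  have hAMGM := Real.geom_mean_le_arith_mean_weighted Finset.univ w z
    (fun i _ => by positivity) hw (fun i _ => (hzpos i).le)
  have hJensen := convexOn_exp.map_sum_le (t := Finset.univ) (w := w)
    (p := fun j => -(2*lam) * d j) (fun i _ => by positivity) hw
    (fun i _ => Set.mem_univ _)
  have hxsum : ∑ j : Fin m, w j • (-(2*lam) * d j) = -(2*lam) * (1/m) := by
    simp only [hw_def, smul_eq_mul]
    rw [Finset.sum_congr rfl fun j (_ : j ∈ Finset.univ) =>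
      (by ring : (m:ℝ)⁻¹ * (-(2*lam) * d j) = (m:ℝ)⁻¹ * -(2*lam) * d j),
      ← Finset.mul_sum, hdsum, mul_one]
    ring
  have hS : ∑ j : Fin m, w j * z j ≤ Z := by
    have e1 : ∑ j : Fin m, w j * z j
        = 1 - ∑ j : Fin m, w j * Real.exp (-(2*lam) * d j) := by
      simp only [hw_def, hz, mul_sub, mul_one]
      rw [Finset.sum_sub_distrib, hw]
    have e2 : Real.exp (-(2*lam) * (1/m)) ≤ ∑ j : Fin m, w j * Real.exp (-(2*lam) * d j) := by
      have := hJensen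
      rw [hxsum] at this
      simpa [smul_eq_mul] using this
    rw [e1, hZ]
    linarith
  have hprod_nonneg : (0:ℝ) ≤ ∏ j : Fin m, z j :=
    Finset.prod_nonneg fun j _ => (hzpos j).le
  have hrpow : ∏ j : Fin m, z j ^ ((m:ℝ)⁻¹) = (∏ j : Fin m, z j) ^ ((m:ℝ)⁻¹) :=
    Real.finset_prod_rpow Finset.univ z (fun i _ => (hzpos i).le) _
  have hback : ((∏ j : Fin m, z j) ^ ((m:ℝ)⁻¹)) ^ (m:ℕ) = ∏ j : Fin m, z j := by
    rw [← Real.rpow_natCast ((∏ j : Fin m, z j) ^ ((m:ℝ)⁻¹)) m,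
      ← Real.rpow_mul hprod_nonneg, inv_mul_cancel₀ hm0.ne', Real.rpow_one]
  have hQ0 : (0:ℝ) ≤ (∏ j : Fin m, z j) ^ ((m:ℝ)⁻¹) :=
    Real.rpow_nonneg hprod_nonneg _
  have hQle : (∏ j : Fin m, z j) ^ ((m:ℝ)⁻¹) ≤ ∑ j : Fin m, w j * z j := by
    rw [← hrpow]
    have : ∀ j : Fin m, z j ^ ((m:ℝ)⁻¹) = z j ^ w j := fun j => rfl
    rw [Finset.prod_congr rfl fun j _ => this j]
    exact hAMGM
  have hmain : ∏ j : Fin m, z j ≤ Z ^ m := by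
    calc ∏ j : Fin m, z j = ((∏ j : Fin m, z j) ^ ((m:ℝ)⁻¹)) ^ (m:ℕ) := hback.symm
      _ ≤ (∑ j : Fin m, w j * z j) ^ (m:ℕ) := pow_le_pow_left₀ hQ0 hQle m
      _ ≤ Z ^ m := pow_le_pow_left₀ (hQ0.trans hQle) hS m
  have hdetle : (Cmat lam ω t).det ≤ (Cmat lam ω teq).det := by
    rw [hdetT, hdetE]
    exact pow_le_pow_left₀ hprod_nonneg hmain 2
  refine ⟨hdetle, ?_⟩
  have hposT : 0 < (Cmat lam ω t).det := by
    rw [hdetT]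
    exact pow_pos (Finset.prod_pos fun j _ => hzpos j) 2
  exact Real.log_le_log hposT hdetle
end
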